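/- arXiv:2508.04890 — 6 statements merged into one kernel-verified Lean document; each statement's English description precedes it below -/
import Mathlib

section
/- Let A be a bounded self-adjoint operator on a complex Hilbert space H with 0 ≤ A ≤ I. Then for every vector x ∈ H, the sequence A^(2^n) x converges in norm as n → ∞, and the limit operator P (defined by Px = lim A^(2^n) x) is the orthogonal projection onto ker(I - A). -/
/-!
For `0 ≤ A ≤ 1` the powers satisfy `0 ≤ A ^ (k + 1) ≤ A ^ k`, so `k ↦ re ⟪A ^ k z, z⟫` is
antitone and nonnegative, hence convergent. Since `A` is self-adjoint,
`‖A ^ m z - A ^ n z‖² = re ⟪A ^ (2m) z, z⟫ + re ⟪A ^ (2n) z, z⟫ - 2 re ⟪A ^ (m + n) z, z⟫`,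
which tends to `0`, so the full sequence `A ^ n x` is Cauchy. Its limit `w` is fixed by `A`, and
`x - w` is orthogonal to every fixed vector `y` because `⟪x - A ^ n x, y⟫ = ⟪x, y - A ^ n y⟫ = 0`;
hence `w` is the orthogonal projection of `x` onto `ker (1 - A)`.
-/
open Filter Topology

noncomputable def projOnto {H : Type*} [NormedAddCommGroup H] [InnerProductSpace ℂ H]
    [CompleteSpace H] (K : Submodule ℂ H) [CompleteSpace K] : H →L[ℂ] H :=
  K.subtypeL ∘L K.orthogonalProjectionOnto

namespace ContinuousLinearMap

section RCLike

variable {𝕜 E : Type*} [RCLike 𝕜] [NormedAddCommGroup E] [InnerProductSpace 𝕜 E]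
  {A : E →L[𝕜] E}

lemma pow_apply_eq_self_of_mem_ker_one_sub {y : E}
    (hy : y ∈ LinearMap.ker ((1 - A : E →L[𝕜] E) : E →ₗ[𝕜] E)) (n : ℕ) : (A ^ n) y = y := by
  have hAy : A y = y := (sub_eq_zero.1 hy).symm
  rw [FunLike.coe_pow_eq_iterate, Function.iterate_fixed hAy]

variable [CompleteSpace E]

lemma _root_.IsSelfAdjoint.inner_pow_apply_pow_apply (hA : IsSelfAdjoint A) (z : E) (m n : ℕ) :
    inner 𝕜 ((A ^ m) z) ((A ^ n) z) = inner 𝕜 ((A ^ (n + m)) z) z := by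
  rw [pow_add, mul_apply_eq_comp]
  exact ((hA.pow n).isSymmetric _ _).symm

lemma _root_.IsSelfAdjoint.norm_pow_apply_sub_pow_apply_sq (hA : IsSelfAdjoint A) (z : E)
    (m n : ℕ) :
    ‖(A ^ m) z - (A ^ n) z‖ ^ 2 = (A ^ (m + m)).reApplyInnerSelf z
      + (A ^ (n + n)).reApplyInnerSelf z - 2 * (A ^ (m + n)).reApplyInnerSelf z := by
  rw [@norm_sub_sq 𝕜, @norm_sq_eq_re_inner 𝕜, @norm_sq_eq_re_inner 𝕜,
    hA.inner_pow_apply_pow_apply, hA.inner_pow_apply_pow_apply, hA.inner_pow_apply_pow_apply,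
    add_comm n m]
  simp only [reApplyInnerSelf_apply]
  ring

lemma _root_.IsSelfAdjoint.starProjection_eq_of_tendsto_pow_apply (hA : IsSelfAdjoint A)
    {x w : E} (hw : Tendsto (fun n => (A ^ n) x) atTop (𝓝 w)) :
    (LinearMap.ker ((1 - A : E →L[𝕜] E) : E →ₗ[𝕜] E)).starProjection x = w := by
  have hAw : A w = w := by
    refine tendsto_nhds_unique ((A.continuous.tendsto w).comp hw) ?_
    simpa only [Function.comp_def, ← mul_apply_eq_comp, ← pow_succ'] using
      hw.comp (tendsto_add_atTop_nat 1)
  refine Submodule.eq_starProjection_of_mem_of_inner_eq_zero (by simp [hAw]) fun y hy => ?_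
  have hxy : ∀ n, inner 𝕜 (x - (A ^ n) x) y = 0 := fun n => by
    have hsymm : inner 𝕜 ((A ^ n) x) y = inner 𝕜 x ((A ^ n) y) := (hA.pow n).isSymmetric x y
    rw [inner_sub_left, hsymm, pow_apply_eq_self_of_mem_ker_one_sub hy, sub_self]
  exact tendsto_nhds_unique ((tendsto_const_nhds.sub hw).inner tendsto_const_nhds)
    (by simpa only [hxy] using tendsto_const_nhds)

end RCLike

variable {H : Type*} [NormedAddCommGroup H] [InnerProductSpace ℂ H] [CompleteSpace H]
  {A : H →L[ℂ] H}

lemma reApplyInnerSelf_pow_nonneg (h0 : 0 ≤ A) (z : H) (k : ℕ) :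
    0 ≤ (A ^ k).reApplyInnerSelf z :=
  ((nonneg_iff_isPositive _).1 (CStarAlgebra.pow_nonneg h0 k)).2 z

lemma antitone_reApplyInnerSelf_pow (h0 : 0 ≤ A) (h1 : A ≤ 1) (z : H) :
    Antitone fun k => (A ^ k).reApplyInnerSelf z := fun _ _ hmk => by
  have := ((le_def _ _).1 (CStarAlgebra.pow_antitone h0 h1 hmk)).2 z
  simpa [reApplyInnerSelf_apply, inner_sub_left] using this

lemma cauchySeq_pow_apply (h0 : 0 ≤ A) (h1 : A ≤ 1) (z : H) :
    CauchySeq fun n => (A ^ n) z := by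
  set f : ℕ → ℝ := fun k => (A ^ k).reApplyInnerSelf z
  have hf : Tendsto f atTop (𝓝 (⨅ k, f k)) :=
    tendsto_atTop_ciInf (antitone_reApplyInnerSelf_pow h0 h1 z)
      ⟨0, Set.forall_mem_range.2 (reApplyInnerSelf_pow_nonneg h0 z)⟩
  have hf_comp : ∀ u : ℕ × ℕ → ℕ, Monotone u → (∀ b, ∃ p, b ≤ u p) →
      Tendsto (fun p => f (u p)) atTop (𝓝 (⨅ k, f k)) := fun u hu hb =>
    hf.comp (tendsto_atTop_atTop_of_monotone hu hb)
  have hsq := ((hf_comp (fun p => p.1 + p.1) (fun _ _ h => add_le_add h.1 h.1)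
      fun b => ⟨(b, 0), le_add_self⟩).add (hf_comp (fun p => p.2 + p.2)
      (fun _ _ h => add_le_add h.2 h.2) fun b => ⟨(0, b), le_add_self⟩)).sub
    ((hf_comp (fun p => p.1 + p.2) (fun _ _ h => add_le_add h.1 h.2)
      fun b => ⟨(0, b), le_add_self⟩).const_mul 2)
  rw [cauchySeq_iff_tendsto_dist_atTop_0]
  convert hsq.sqrt using 1
  · ext p
    rw [dist_eq_norm, ← (IsSelfAdjoint.of_nonneg h0).norm_pow_apply_sub_pow_apply_sq,
      Real.sqrt_sq (norm_nonneg _)]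
  · rw [← two_mul, sub_self, Real.sqrt_zero]

lemma tendsto_pow_apply_starProjection (h0 : 0 ≤ A) (h1 : A ≤ 1) (x : H) :
    Tendsto (fun n => (A ^ n) x) atTop
      (𝓝 ((LinearMap.ker ((1 - A : H →L[ℂ] H) : H →ₗ[ℂ] H)).starProjection x)) := by
  obtain ⟨w, hw⟩ := cauchySeq_tendsto_of_complete (cauchySeq_pow_apply h0 h1 x)
  rwa [(IsSelfAdjoint.of_nonneg h0).starProjection_eq_of_tendsto_pow_apply hw]

end ContinuousLinearMap

/-- For a bounded self-adjoint operator `A` with `0 ≤ A ≤ I`, the iterates `A^(2^n) x`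
converge in norm for each `x`, and the limit operator is the orthogonal projection
onto `ker (I - A)`. -/
theorem stmt0 {H : Type*} [NormedAddCommGroup H] [InnerProductSpace ℂ H] [CompleteSpace H]
    (A : H →L[ℂ] H) (hA : IsSelfAdjoint A)
    (h0 : ∀ x : H, 0 ≤ (inner ℂ (A x) x : ℂ).re)
    (h1 : ∀ x : H, (inner ℂ (A x) x : ℂ).re ≤ (inner ℂ x x : ℂ).re) :
    ∃ P : H →L[ℂ] H,
      (∀ x : H, Tendsto (fun n : ℕ => (A ^ (2 ^ n)) x) atTop (𝓝 (P x))) ∧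
      P = projOnto (LinearMap.ker ((1 - A : H →L[ℂ] H) : H →ₗ[ℂ] H)) := by
  have hA0 : 0 ≤ A :=
    (ContinuousLinearMap.nonneg_iff_isPositive A).2 (ContinuousLinearMap.isPositive_def'.2 ⟨hA, h0⟩)
  have hA1 : A ≤ 1 := ContinuousLinearMap.isPositive_def'.2
    ⟨(IsSelfAdjoint.one _).sub hA, fun x => by
      simpa [ContinuousLinearMap.reApplyInnerSelf_apply, inner_sub_left] using h1 x⟩
  refine ⟨projOnto _, fun x => ?_, rfl⟩
  exact (ContinuousLinearMap.tendsto_pow_apply_starProjection hA0 hA1 x).comp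
    (tendsto_pow_atTop_atTop_of_one_lt one_lt_two)
end

section
/- Let A be a bounded self-adjoint operator on a complex Hilbert space with 0 ≤ A ≤ I, and let P be the strong limit of A^(2^n). Then P is idempotent (P² = P), self-adjoint, commutes with A, and satisfies P² = P = P ∘ A = A ∘ P on the range of P (i.e., A acts as the identity on the range of P). -/
/-!
In the Loewner order `0 ≤ A ≤ 1`, so the powers `A ^ k` are positive contractions decreasing in
`k`. Uniform boundedness lets strong limits pass through products, which gives `P * P = P`;
self-adjointness and commutation with `A` pass to the limit directly. Since `A ^ (2 ^ n) ≤ A`, also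
`P ≤ A`, so for `y = P y` we get `‖y‖² ≤ re ⟪A y, y⟫`; together with `‖B y‖² ≤ re ⟪B y, y⟫` for
`B = 1 - A` this forces `A y = y`.
-/

open Filter Topology

namespace ContinuousLinearMap

variable {H : Type*} [NormedAddCommGroup H] [InnerProductSpace ℂ H]

lemma re_inner_le_re_inner_of_le {S T : H →L[ℂ] H} (h : S ≤ T) (x : H) :
    (inner ℂ (S x) x).re ≤ (inner ℂ (T x) x).re := by
  have := ((le_def S T).mp h).re_inner_nonneg_left x
  rwa [sub_apply, inner_sub_left, map_sub, sub_nonneg] at this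

variable [CompleteSpace H]

lemma nonneg_of_re_inner_nonneg {A : H →L[ℂ] H} (hA : IsSelfAdjoint A)
    (h0 : ∀ x : H, 0 ≤ (inner ℂ (A x) x).re) : 0 ≤ A :=
  (nonneg_iff_isPositive A).mpr ⟨hA.isSymmetric, h0⟩

lemma le_one_of_re_inner_le {A : H →L[ℂ] H} (hA : IsSelfAdjoint A)
    (h1 : ∀ x : H, (inner ℂ (A x) x).re ≤ (inner ℂ x x).re) : A ≤ 1 := by
  refine (le_def A 1).mpr ⟨((IsSelfAdjoint.one _).sub hA).isSymmetric, fun x => ?_⟩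
  rw [reApplyInnerSelf_apply, sub_apply, one_apply_eq_self, inner_sub_left, map_sub, sub_nonneg]
  exact h1 x

lemma norm_pow_le_one_of_nonneg_of_le_one {A : H →L[ℂ] H} (h0 : 0 ≤ A) (h1 : A ≤ 1) (n : ℕ) :
    ‖A ^ n‖ ≤ 1 :=
  (CStarAlgebra.mem_Icc_iff_norm_le_one.mp
    ⟨CStarAlgebra.pow_nonneg h0 n, pow_zero A ▸ CStarAlgebra.pow_antitone h0 h1 n.zero_le⟩).2

lemma norm_apply_sq_le_re_inner {B : H →L[ℂ] H} (h0 : 0 ≤ B) (h1 : B ≤ 1) (x : H) :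
    ‖B x‖ ^ 2 ≤ (inner ℂ (B x) x).re := by
  have hsq : B ^ 2 ≤ B ^ 1 := CStarAlgebra.pow_antitone h0 h1 one_le_two
  have := re_inner_le_re_inner_of_le hsq x
  rwa [pow_one, sq, mul_apply_eq_comp, ((nonneg_iff_isPositive B).mp h0).inner_left_eq_inner_right,
    ← RCLike.re_to_complex, inner_self_eq_norm_sq] at this

lemma apply_eq_self_of_le_of_apply_eq_self {A P : H →L[ℂ] H} (h0 : 0 ≤ A) (h1 : A ≤ 1)
    (hPA : P ≤ A) {y : H} (hy : P y = y) : A y = y := by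
  have hAy : ‖y‖ ^ 2 ≤ (inner ℂ (A y) y).re := by
    simpa only [hy, ← RCLike.re_to_complex, inner_self_eq_norm_sq] using
      re_inner_le_re_inner_of_le hPA y
  -- `1 - A` lies between `0` and `1` as well
  have hB := norm_apply_sq_le_re_inner (sub_nonneg.mpr h1) (sub_le_self 1 h0) y
  rw [sub_apply, one_apply_eq_self, inner_sub_left, Complex.sub_re, ← RCLike.re_to_complex,
    inner_self_eq_norm_sq] at hB
  have : ‖y - A y‖ = 0 := by nlinarith [norm_nonneg (y - A y)]
  exact (sub_eq_zero.mp (norm_eq_zero.mp this)).symm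

section StrongLimit

variable {𝕜 E F : Type*} [RCLike 𝕜] {ι : Type*} {l : Filter ι}

lemma tendsto_apply_apply_of_norm_le [NormedAddCommGroup E] [NormedSpace 𝕜 E]
    [NormedAddCommGroup F] [NormedSpace 𝕜 F] {T : ι → E →L[𝕜] F} {P : E →L[𝕜] F}
    (hT : ∀ x, Tendsto (fun i => T i x) l (𝓝 (P x))) {C : ℝ} (hC : ∀ i, ‖T i‖ ≤ C)
    {y : ι → E} {z : E} (hy : Tendsto y l (𝓝 z)) :
    Tendsto (fun i => T i (y i)) l (𝓝 (P z)) := by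
  rw [tendsto_iff_norm_sub_tendsto_zero] at hy ⊢
  have hbound : ∀ i, ‖T i (y i) - P z‖ ≤ C * ‖y i - z‖ + ‖T i z - P z‖ := fun i =>
    calc ‖T i (y i) - P z‖ = ‖T i (y i - z) + (T i z - P z)‖ := by rw [map_sub]; abel_nf
      _ ≤ ‖T i‖ * ‖y i - z‖ + ‖T i z - P z‖ := norm_add_le_of_le (le_opNorm _ _) le_rfl
      _ ≤ C * ‖y i - z‖ + ‖T i z - P z‖ := by gcongr; exact hC i
  refine squeeze_zero (fun _ => norm_nonneg _) hbound ?_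
  simpa using (hy.const_mul C).add (tendsto_iff_norm_sub_tendsto_zero.mp (hT z))

lemma commute_of_tendsto_apply [TopologicalSpace E] [T2Space E] [AddCommMonoid E] [Module 𝕜 E]
    {T : ι → E →L[𝕜] E} {P : E →L[𝕜] E} [l.NeBot]
    (hT : ∀ x, Tendsto (fun i => T i x) l (𝓝 (P x))) {A : E →L[𝕜] E}
    (hA : ∀ i, Commute A (T i)) : Commute A P := by
  ext x
  refine tendsto_nhds_unique ((A.continuous.tendsto _).comp (hT x)) ?_
  simpa only [Function.comp_def, ← mul_apply_eq_comp, (hA _).eq] using hT (A x)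

variable [NormedAddCommGroup E] [InnerProductSpace 𝕜 E] [CompleteSpace E]
  {T : ι → E →L[𝕜] E} {P : E →L[𝕜] E} [l.NeBot]

lemma isSelfAdjoint_of_tendsto_apply (hT : ∀ x, Tendsto (fun i => T i x) l (𝓝 (P x)))
    (hsa : ∀ i, IsSelfAdjoint (T i)) : IsSelfAdjoint P := by
  refine isSelfAdjoint_iff_isSymmetric.mpr fun x y => tendsto_nhds_unique
    ((hT x).inner (𝕜 := 𝕜) tendsto_const_nhds) ?_
  exact (tendsto_const_nhds.inner (hT y)).congr fun i => ((hsa i).isSymmetric x y).symm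

lemma le_of_tendsto_apply (hT : ∀ x, Tendsto (fun i => T i x) l (𝓝 (P x))) {S : E →L[𝕜] E}
    (hP : IsSelfAdjoint P) (hS : IsSelfAdjoint S) (hle : ∀ i, T i ≤ S) : P ≤ S := by
  refine (le_def P S).mpr ⟨(hS.sub hP).isSymmetric, fun x => ge_of_tendsto' (x := l) ?_
    fun i => ((le_def _ _).mp (hle i)).re_inner_nonneg_left x⟩
  exact (RCLike.continuous_re.tendsto _).comp
    ((tendsto_const_nhds.sub (hT x)).inner tendsto_const_nhds)

end StrongLimit

end ContinuousLinearMap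

open ContinuousLinearMap

/-- If `P` is the strong limit of `A^(2^n)` for a self-adjoint `A` with `0 ≤ A ≤ I`,
then `P` is a self-adjoint idempotent commuting with `A`, and `A` acts as the identity
on the range of `P`, i.e. `P² = P = P ∘ A = A ∘ P`. -/
theorem stmt1 {H : Type*} [NormedAddCommGroup H] [InnerProductSpace ℂ H] [CompleteSpace H]
    (A : H →L[ℂ] H) (hA : IsSelfAdjoint A)
    (h0 : ∀ x : H, 0 ≤ (inner ℂ (A x) x : ℂ).re)
    (h1 : ∀ x : H, (inner ℂ (A x) x : ℂ).re ≤ (inner ℂ x x : ℂ).re)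
    (P : H →L[ℂ] H)
    (hP : ∀ x : H, Tendsto (fun n : ℕ => (A ^ (2 ^ n)) x) atTop (𝓝 (P x))) :
    P * P = P ∧ IsSelfAdjoint P ∧ A * P = P * A ∧ A * P = P ∧ P * A = P ∧
      ∀ x ∈ LinearMap.range (P : H →ₗ[ℂ] H), A x = x := by
  have hA0 : 0 ≤ A := nonneg_of_re_inner_nonneg hA h0
  have hA1 : A ≤ 1 := le_one_of_re_inner_le hA h1
  have hPsa : IsSelfAdjoint P := isSelfAdjoint_of_tendsto_apply hP fun n => hA.pow _
  have hcomm : Commute A P := commute_of_tendsto_apply hP fun n => (Commute.refl A).pow_right _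
  have hPP : P * P = P := by
    ext x
    refine tendsto_nhds_unique (tendsto_apply_apply_of_norm_le hP
      (fun n => norm_pow_le_one_of_nonneg_of_le_one hA0 hA1 _) (hP x)) ?_
    simpa only [Function.comp_def, Nat.pow_succ, pow_mul, sq, mul_apply_eq_comp] using
      (hP x).comp (tendsto_add_atTop_nat 1)
  have hPA : P ≤ A := le_of_tendsto_apply hP hPsa hA fun n => by
    simpa only [pow_one] using CStarAlgebra.pow_antitone hA0 hA1 n.one_le_two_pow
  have hAP : A * P = P :=
    ext fun x => apply_eq_self_of_le_of_apply_eq_self hA0 hA1 hPA congr($hPP x)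
  refine ⟨hPP, hPsa, hcomm.eq, hAP, hcomm.eq ▸ hAP, ?_⟩
  rintro _ ⟨x, rfl⟩
  exact congr($hAP x)
end

section
/- Let T be a bounded operator on a complex Hilbert space with ‖T‖ ≤ 1 (a contraction). Then for every x ∈ H, the Cesàro averages (1/n) ∑_{k=0}^{n-1} T^k x converge in norm to Px, where P is the orthogonal projection onto the subspace of fixed vectors {x : Tx = x} (von Neumann mean ergodic theorem). -/
open Filter Topology

theorem ContinuousLinearMap.ker_one_sub_eq_eqLocus {R M : Type*} [Ring R] [TopologicalSpace M]
    [AddCommGroup M] [Module R M] [IsTopologicalAddGroup M] (T : M →L[R] M) :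
    LinearMap.ker ((1 - T : M →L[R] M) : M →ₗ[R] M) = T.eqLocus (1 : M →L[R] M) := by
  ext y
  simp [sub_eq_zero, eq_comm (a := y)]

theorem projOnto_apply_of_eq {H : Type*} [NormedAddCommGroup H]
    [InnerProductSpace ℂ H] [CompleteSpace H] {K K' : Submodule ℂ H} [CompleteSpace K]
    [K'.HasOrthogonalProjection] (h : K = K') (x : H) :
    projOnto K x = K'.orthogonalProjectionOnto x := by
  subst h
  -- the two instances are proofs of propositions, so both sides unfold to the same term
  rfl

theorem ContinuousLinearMap.birkhoffAverage_id_eq_smul_sum_pow {R M : Type*} [DivisionRing R]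
    [TopologicalSpace M] [AddCommMonoid M] [Module R M] (T : M →L[R] M) (n : ℕ) (x : M) :
    birkhoffAverage R T id n x = (n : R)⁻¹ • ∑ k ∈ Finset.range n, (T ^ k) x := by
  simp [birkhoffAverage, birkhoffSum]

/-- Von Neumann mean ergodic theorem: for a contraction `T` on a complex Hilbert space,
the Cesàro averages `(1/n) ∑_{k<n} T^k x` converge in norm to `P x`, where `P` is the
orthogonal projection onto the fixed subspace `ker (I - T)`. -/
theorem stmt6 {H : Type*} [NormedAddCommGroup H] [InnerProductSpace ℂ H] [CompleteSpace H]
    (T : H →L[ℂ] H) (hT : ‖T‖ ≤ 1) :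
    ∀ x : H,
      Tendsto (fun n : ℕ => ((n : ℂ))⁻¹ • ∑ k ∈ Finset.range n, (T ^ k) x) atTop
        (𝓝 (projOnto (LinearMap.ker ((1 - T : H →L[ℂ] H) : H →ₗ[ℂ] H)) x)) := by
  intro x
  rw [projOnto_apply_of_eq T.ker_one_sub_eq_eqLocus]
  convert T.tendsto_birkhoffAverage_orthogonalProjection hT x using 2 with n
  exact (T.birkhoffAverage_id_eq_smul_sum_pow n x).symm
end

section
/- Let A be a bounded self-adjoint operator on a complex Hilbert space with σ(A) ⊆ [0,1]. Suppose 1 is an isolated point of σ(A) (there exists δ > 0 with σ(A) ∩ (1-δ, 1) = ∅). Then A^n converges in operator norm to the spectral projection onto the eigenspace ker(I - A). -/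
/-!
Since `1` is isolated in `σ(A) ⊆ [0, 1]`, the spectrum lies in `[0, r] ∪ {1}` for some `r < 1`.
For a continuous `g` vanishing on `[0, r]` with `g 1 = 1`, the continuous functional calculus
gives `‖Aⁿ - g(A)‖ ≤ rⁿ`, so `Aⁿ` converges in norm. Any limit `P` of `Aⁿ` is self-adjoint,
satisfies `A P = P` and fixes `ker (1 - A)`; these properties characterize the orthogonal
projection onto `ker (1 - A)`.
-/

open Filter Topology

open Set

section PowerConvergence

variable {B : Type*} [CStarAlgebra B] {a : B}

lemma norm_pow_sub_cfc_le (ha : IsSelfAdjoint a) {r : ℝ} (hr : 0 ≤ r)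
    (hspec : spectrum ℝ a ⊆ Icc 0 r ∪ {1}) {g : ℝ → ℝ} (hg : ContinuousOn g (spectrum ℝ a))
    (hg0 : EqOn g 0 (Icc 0 r)) (hg1 : g 1 = 1) (n : ℕ) :
    ‖a ^ n - cfc g a‖ ≤ r ^ n := by
  rw [← cfc_pow_id (R := ℝ) a n, ← cfc_sub (fun x : ℝ => x ^ n) g a]
  refine norm_cfc_le (pow_nonneg hr n) fun x hx => ?_
  rcases hspec hx with ⟨hx0, hxr⟩ | rfl
  · rw [hg0 ⟨hx0, hxr⟩, Pi.zero_apply, sub_zero, norm_pow, Real.norm_of_nonneg hx0]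
    exact pow_le_pow_left₀ hx0 hxr n
  · simpa [hg1] using pow_nonneg hr n

lemma exists_tendsto_pow_of_spectrum_subset (ha : IsSelfAdjoint a) {r : ℝ} (hr0 : 0 ≤ r)
    (hr1 : r < 1) (hspec : spectrum ℝ a ⊆ Icc 0 r ∪ {1}) :
    ∃ p, Tendsto (fun n : ℕ => a ^ n) atTop (𝓝 p) := by
  set g : ℝ → ℝ := fun x => max 0 ((x - r) / (1 - r))
  have hg0 : EqOn g 0 (Icc 0 r) := fun x hx =>
    max_eq_left (div_nonpos_of_nonpos_of_nonneg (by linarith [hx.2]) (by linarith))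
  have hg1 : g 1 = 1 := by simp [g, div_self (sub_ne_zero.mpr hr1.ne')]
  refine ⟨cfc g a, tendsto_iff_norm_sub_tendsto_zero.mpr ?_⟩
  exact squeeze_zero (fun n => norm_nonneg _)
    (norm_pow_sub_cfc_le ha hr0 hspec (by fun_prop) hg0 hg1)
    (tendsto_pow_atTop_nhds_zero_of_lt_one hr0 hr1)

end PowerConvergence

section Projection

variable {H : Type*} [NormedAddCommGroup H] [InnerProductSpace ℂ H] [CompleteSpace H]

lemma eq_projOnto_ker_of_tendsto_pow {A P : H →L[ℂ] H} (hA : IsSelfAdjoint A)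
    (hP : Tendsto (fun n : ℕ => A ^ n) atTop (𝓝 P)) :
    P = projOnto (LinearMap.ker ((1 - A : H →L[ℂ] H) : H →ₗ[ℂ] H)) := by
  set K := LinearMap.ker ((1 - A : H →L[ℂ] H) : H →ₗ[ℂ] H)
  have hPsa : IsSelfAdjoint P :=
    isClosed_eq continuous_star continuous_id |>.mem_of_tendsto hP
      (Eventually.of_forall fun n => (hA.pow n : IsSelfAdjoint (A ^ n)))
  have hAP : A * P = P := by
    refine tendsto_nhds_unique ((continuous_const_mul A).tendsto P |>.comp hP) ?_
    simpa [Function.comp_def, ← pow_succ'] using hP.comp (tendsto_add_atTop_nat 1)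
  have hfix : ∀ u ∈ K, P u = u := by
    intro u hu
    have hAu : A u = u := (sub_eq_zero.mp (LinearMap.mem_ker.mp hu)).symm
    refine tendsto_nhds_unique (((ContinuousLinearMap.apply ℂ H u).continuous.tendsto P).comp hP) ?_
    simp [Function.comp_def, Function.iterate_fixed hAu]
  ext v
  refine (Submodule.eq_starProjection_of_mem_of_inner_eq_zero ?_ fun u hu => ?_).symm
  · rw [LinearMap.mem_ker]
    simpa [sub_eq_zero] using congr($hAP.symm v)
  · rw [inner_sub_left, ← hPsa.adjoint_eq, ContinuousLinearMap.adjoint_inner_left, hfix u hu,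
      sub_self]

end Projection

/-- If `A` is self-adjoint with `σ(A) ⊆ [0,1]` and `1` is isolated in the spectrum
(spectral gap `(1-δ, 1)` is disjoint from `σ(A)`), then `A^n` converges in operator
norm to the orthogonal projection onto `ker (I - A)`. -/
theorem stmt8 {H : Type*} [NormedAddCommGroup H] [InnerProductSpace ℂ H] [CompleteSpace H]
    (A : H →L[ℂ] H) (hA : IsSelfAdjoint A)
    (hspec : spectrum ℝ A ⊆ Set.Icc 0 1)
    (δ : ℝ) (hδ : 0 < δ) (hgap : spectrum ℝ A ∩ Set.Ioo (1 - δ) 1 = ∅) :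
    Tendsto (fun n : ℕ => A ^ n) atTop (𝓝 (projOnto (LinearMap.ker ((1 - A : H →L[ℂ] H) : H →ₗ[ℂ] H)))) := by
  have hsub : spectrum ℝ A ⊆ Icc 0 (max (1 - δ) 0) ∪ {1} := by
    intro x hx
    obtain ⟨hx0, hx1⟩ := hspec hx
    rcases hx1.lt_or_eq with hx1 | rfl
    · refine Or.inl ⟨hx0, le_max_of_le_left (not_lt.mp fun h => ?_)⟩
      exact eq_empty_iff_forall_notMem.mp hgap x ⟨hx, h, hx1⟩
    · exact Or.inr rfl
  obtain ⟨P, hP⟩ := exists_tendsto_pow_of_spectrum_subset hA (le_max_right _ _)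
    (max_lt (by linarith) one_pos) hsub
  rwa [← eq_projOnto_ker_of_tendsto_pow hA hP]
end

section
/- Let A be a bounded self-adjoint operator on a complex Hilbert space with A ≤ 0. Then for every x ∈ H, exp(tA)x converges as t → ∞ to Px, where P is the orthogonal projection onto ker(A). -/
/-! Through the continuous functional calculus, `exp (t • A) = f_t(A)` with `f_t(λ) = e^{tλ}`,
and `A ≤ 0` puts the spectrum of `A` in `(-∞, 0]`. There `|e^{tλ}| ≤ 1` and
`|λ e^{tλ}| ≤ 1/t`, so `‖exp (t • A)‖ ≤ 1` and `‖exp (t • A) * A‖ ≤ 1/t`. Hence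
`exp (t • A) y → 0` for `y` in the range of `A`, and, by the uniform bound, on its closure
`(ker A)ᗮ`; on `ker A` itself `exp (t • A)` is the identity. -/

open Filter Topology

open NormedSpace

lemma abs_exp_mul_mul_le_inv {t x : ℝ} (ht : 0 < t) (hx : x ≤ 0) :
    |Real.exp (t * x) * x| ≤ t⁻¹ := by
  rw [abs_mul, abs_of_nonpos hx, abs_of_pos (Real.exp_pos _), ← one_div, le_div_iff₀ ht]
  calc Real.exp (t * x) * -x * t = -(t * x) * Real.exp (t * x) := by ring
    _ ≤ Real.exp (-(t * x)) * Real.exp (t * x) := by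
      gcongr
      linarith [Real.add_one_le_exp (-(t * x))]
    _ = 1 := by rw [← Real.exp_add, neg_add_cancel, Real.exp_zero]

theorem tendsto_apply_nhds_zero_of_mem_closure {ι 𝕜 E F : Type*} [NontriviallyNormedField 𝕜]
    [SeminormedAddCommGroup E] [NormedSpace 𝕜 E] [SeminormedAddCommGroup F] [NormedSpace 𝕜 F]
    {l : Filter ι} {T : ι → E →L[𝕜] F} {C : ℝ} (hT : ∀ᶠ i in l, ‖T i‖ ≤ C) {s : Set E}
    (hs : ∀ y ∈ s, Tendsto (fun i => T i y) l (𝓝 0)) {x : E} (hx : x ∈ closure s) :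
    Tendsto (fun i => T i x) l (𝓝 0) := by
  rw [Metric.tendsto_nhds]
  intro ε hε
  obtain ⟨δ, hδ, hCδ⟩ := exists_pos_mul_lt (half_pos hε) C
  obtain ⟨y, hys, hxy⟩ := Metric.mem_closure_iff.1 hx δ hδ
  filter_upwards [hT, Metric.tendsto_nhds.1 (hs y hys) (ε / 2) (half_pos hε)] with i hTi hyi
  rw [dist_zero_right] at hyi ⊢
  rw [dist_eq_norm] at hxy
  calc ‖T i x‖ = ‖T i (x - y) + T i y‖ := by rw [← map_add, sub_add_cancel]
    _ ≤ ‖T i‖ * ‖x - y‖ + ‖T i y‖ := norm_add_le_of_le ((T i).le_opNorm _) le_rfl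
    _ ≤ C * δ + ‖T i y‖ := by gcongr; exact (norm_nonneg _).trans hTi
    _ < ε := by linarith

lemma exp_smul_apply_of_apply_eq_zero {E : Type*} [NormedAddCommGroup E] [NormedSpace ℂ E]
    [CompleteSpace E] {A : E →L[ℂ] E} {v : E} (hv : A v = 0) (t : ℝ) :
    exp (t • A) v = v := by
  have hderiv (s : ℝ) : HasDerivAt (fun s : ℝ => exp (s • A) v) 0 s := by
    simpa [Function.comp_def, hv] using
      ((ContinuousLinearMap.apply ℂ E v).restrictScalars ℝ).hasFDerivAt.comp_hasDerivAt s
        (hasDerivAt_exp_smul_const (𝕂 := ℝ) A s)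
  simpa using is_const_of_deriv_eq_zero (fun s => (hderiv s).differentiableAt)
    (fun s => (hderiv s).deriv) t 0

section CStarAlgebra

variable {A : Type*} [CStarAlgebra A]

lemma IsSelfAdjoint.exp_smul_eq_cfc {a : A} (ha : IsSelfAdjoint a) (t : ℝ) :
    NormedSpace.exp (t • a) = cfc (fun x => Real.exp (t * x)) a := by
  rw [← CFC.real_exp_eq_normedSpace_exp ((IsSelfAdjoint.all t).smul ha),
    cfc_comp_const_mul (r := t) (f := Real.exp) (a := a)]

variable [PartialOrder A] [StarOrderedRing A] {a : A}

lemma IsSelfAdjoint.of_nonpos (ha : a ≤ 0) : IsSelfAdjoint a := by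
  simpa using (IsSelfAdjoint.of_nonneg (neg_nonneg.2 ha)).neg

lemma spectrum_nonpos_of_nonpos (ha : a ≤ 0) : ∀ x ∈ spectrum ℝ a, x ≤ 0 :=
  (le_algebraMap_iff_spectrum_le (r := (0 : ℝ)) (IsSelfAdjoint.of_nonpos ha)).1 (by simpa using ha)

lemma norm_exp_smul_le_one (ha : a ≤ 0) {t : ℝ} (ht : 0 ≤ t) : ‖exp (t • a)‖ ≤ 1 := by
  rw [(IsSelfAdjoint.of_nonpos ha).exp_smul_eq_cfc]
  refine norm_cfc_le zero_le_one fun x hx => ?_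
  rw [Real.norm_eq_abs, abs_of_pos (Real.exp_pos _), Real.exp_le_one_iff]
  exact mul_nonpos_of_nonneg_of_nonpos ht (spectrum_nonpos_of_nonpos ha x hx)

lemma norm_exp_smul_mul_le (ha : a ≤ 0) {t : ℝ} (ht : 0 < t) : ‖exp (t • a) * a‖ ≤ t⁻¹ := by
  have hsa := IsSelfAdjoint.of_nonpos ha
  rw [hsa.exp_smul_eq_cfc]
  conv_lhs => arg 1; arg 2; rw [← cfc_id' ℝ a]
  rw [← cfc_mul ..]
  exact norm_cfc_le (by positivity) fun x hx =>
    abs_exp_mul_mul_le_inv ht (spectrum_nonpos_of_nonpos ha x hx)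

end CStarAlgebra

section HilbertSpace

variable {H : Type*} [NormedAddCommGroup H] [InnerProductSpace ℂ H] [CompleteSpace H]
  {A : H →L[ℂ] H}

lemma ContinuousLinearMap.nonpos_of_re_inner_self_nonpos (hA : IsSelfAdjoint A)
    (hneg : ∀ x : H, (inner ℂ (A x) x : ℂ).re ≤ 0) : A ≤ 0 := by
  rw [ContinuousLinearMap.le_def, ContinuousLinearMap.isPositive_def', zero_sub]
  exact ⟨hA.neg, fun x => by simpa [ContinuousLinearMap.reApplyInnerSelf] using hneg x⟩

lemma IsSelfAdjoint.orthogonal_ker (hA : IsSelfAdjoint A) :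
    (LinearMap.ker (A : H →ₗ[ℂ] H))ᗮ = (LinearMap.range (A : H →ₗ[ℂ] H)).topologicalClosure := by
  rw [← ContinuousLinearMap.IsStarNormal.orthogonal_range hA.isStarNormal,
    Submodule.orthogonal_orthogonal_eq_closure]

lemma tendsto_exp_smul_apply_of_mem_range (hA : A ≤ 0) {y : H}
    (hy : y ∈ LinearMap.range (A : H →ₗ[ℂ] H)) :
    Tendsto (fun t : ℝ => exp (t • A) y) atTop (𝓝 0) := by
  obtain ⟨z, rfl⟩ := hy
  refine squeeze_zero_norm' ?_ (by simpa using tendsto_inv_atTop_zero.mul_const ‖z‖)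
  filter_upwards [eventually_gt_atTop 0] with t ht
  exact ((exp (t • A) * A).le_opNorm z).trans (by gcongr; exact norm_exp_smul_mul_le hA ht)

lemma tendsto_exp_smul_apply_of_mem_orthogonal_ker (hA : A ≤ 0) {y : H}
    (hy : y ∈ (LinearMap.ker (A : H →ₗ[ℂ] H))ᗮ) :
    Tendsto (fun t : ℝ => exp (t • A) y) atTop (𝓝 0) := by
  rw [(IsSelfAdjoint.of_nonpos hA).orthogonal_ker, ← SetLike.mem_coe,
    Submodule.topologicalClosure_coe] at hy
  refine tendsto_apply_nhds_zero_of_mem_closure (C := 1) ?_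
    (fun _ hz => tendsto_exp_smul_apply_of_mem_range hA hz) hy
  filter_upwards [eventually_ge_atTop 0] with t ht using norm_exp_smul_le_one hA ht

end HilbertSpace

/-- If `A` is self-adjoint and negative semidefinite, then for every `x`, `exp(tA) x`
converges as `t → ∞` to `P x`, the orthogonal projection of `x` onto `ker A`. -/
theorem stmt16 {H : Type*} [NormedAddCommGroup H] [InnerProductSpace ℂ H] [CompleteSpace H]
    (A : H →L[ℂ] H) (hA : IsSelfAdjoint A)
    (hneg : ∀ x : H, (inner ℂ (A x) x : ℂ).re ≤ 0) :
    ∀ x : H,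
      Tendsto (fun t : ℝ => NormedSpace.exp (t • A) x) atTop
        (𝓝 (projOnto (LinearMap.ker (A : H →ₗ[ℂ] H)) x)) := by
  intro x
  set K := LinearMap.ker (A : H →ₗ[ℂ] H)
  have hPx : A (K.starProjection x) = 0 := K.starProjection_apply_mem x
  have hrest := tendsto_exp_smul_apply_of_mem_orthogonal_ker
    (ContinuousLinearMap.nonpos_of_re_inner_self_nonpos hA hneg)
    (K.sub_starProjection_mem_orthogonal x)
  convert (tendsto_const_nhds (x := K.starProjection x)).add hrest using 1
  · ext t
    rw [map_sub, exp_smul_apply_of_apply_eq_zero hPx, add_sub_cancel]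
  · rw [add_zero]
    rfl
end

section
/- Let A be a bounded self-adjoint operator with σ(A) ⊆ [0,1] and let f : ℝ → ℝ be continuous with f([0,1]) ⊆ [0,1], f(x) < x on (0,1), f(0) = 0, f(1) = 1. Then the sequence of operators f^[n](A) (via functional calculus) converges strongly to the orthogonal projection onto ker(I - A). -/
/-!
Write `T n = f^[n](A)`. Since `f^[n] 1 = 1` and `f^[n]` maps `[0,1]` into itself, every `T n`
fixes `ker (1 - A)` and has norm at most `1`. The complement `(ker (1 - A))ᗮ` is the closure of
the range of `1 - A`, and there `T n (1 - A) = (t ↦ f^[n] t * (1 - t))(A)` tends to `0` in norm: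
for `t ∈ [0,1)` the iterates `f^[n] t` decrease to a fixed point of `f`, which can only be `0`,
so by Dini's theorem `f^[n] t * (1 - t) → 0` uniformly on `[0,1]`. The uniform bound on `‖T n‖`
carries the convergence from the range to its closure.
-/

open Filter Topology

open Set

section Iterate

variable {f : ℝ → ℝ}

lemma apply_le_self_of_mem_Icc (hf0 : f 0 ≤ 0) (hf1 : f 1 ≤ 1)
    (hlt : ∀ x ∈ Ioo (0 : ℝ) 1, f x < x) {x : ℝ} (hx : x ∈ Icc (0 : ℝ) 1) : f x ≤ x := by
  rcases hx.1.eq_or_lt with rfl | hx0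
  · exact hf0
  rcases hx.2.eq_or_lt with rfl | hx1
  · exact hf1
  exact (hlt x ⟨hx0, hx1⟩).le

lemma antitone_iterate_apply_of_mapsTo {α : Type*} [Preorder α] {g : α → α} {s : Set α}
    (hmaps : MapsTo g s s) (hle : ∀ x ∈ s, g x ≤ x) {x : α} (hx : x ∈ s) :
    Antitone (g^[·] x) :=
  antitone_nat_of_succ_le fun n => by
    rw [Function.iterate_succ_apply']
    exact hle _ (hmaps.iterate n hx)

lemma tendsto_iterate_nhds_zero (hf : Continuous f) (hmaps : MapsTo f (Icc 0 1) (Icc 0 1))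
    (hle : ∀ x ∈ Icc (0 : ℝ) 1, f x ≤ x) (hlt : ∀ x ∈ Ioo (0 : ℝ) 1, f x < x)
    {t : ℝ} (ht : t ∈ Ico (0 : ℝ) 1) : Tendsto (f^[·] t) atTop (𝓝 0) := by
  have ht' : t ∈ Icc (0 : ℝ) 1 := Ico_subset_Icc_self ht
  have hmem (n : ℕ) : f^[n] t ∈ Icc (0 : ℝ) 1 := hmaps.iterate n ht'
  have hbdd : BddBelow (range (f^[·] t)) := ⟨0, by rintro _ ⟨n, rfl⟩; exact (hmem n).1⟩
  have hanti := antitone_iterate_apply_of_mapsTo hmaps hle ht'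
  obtain ⟨c, hlim⟩ : ∃ c, Tendsto (f^[·] t) atTop (𝓝 c) := ⟨_, tendsto_atTop_ciInf hanti hbdd⟩
  have hfix : f c = c := isFixedPt_of_tendsto_iterate hlim hf.continuousAt
  have hc0 : 0 ≤ c := ge_of_tendsto' hlim fun n => (hmem n).1
  have hct : c < 1 := (hanti.le_of_tendsto hlim 0).trans_lt ht.2
  obtain rfl : c = 0 := by
    by_contra hc
    exact (hlt c ⟨hc0.lt_of_ne' hc, hct⟩).ne hfix
  exact hlim

lemma tendstoUniformlyOn_iterate_mul_one_sub (hf : Continuous f)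
    (hmaps : MapsTo f (Icc 0 1) (Icc 0 1)) (hle : ∀ x ∈ Icc (0 : ℝ) 1, f x ≤ x)
    (hlt : ∀ x ∈ Ioo (0 : ℝ) 1, f x < x) :
    TendstoUniformlyOn (fun n t => f^[n] t * (1 - t)) 0 atTop (Icc 0 1) := by
  refine Antitone.tendstoUniformlyOn_of_forall_tendsto isCompact_Icc
    (fun n => by fun_prop) (fun t ht => ?_) continuousOn_const (fun t ht => ?_)
  · exact (antitone_iterate_apply_of_mapsTo hmaps hle ht).mul_const (sub_nonneg.mpr ht.2)
  rcases ht.2.eq_or_lt with rfl | ht1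
  · simp
  simpa using (tendsto_iterate_nhds_zero hf hmaps hle hlt ⟨ht.1, ht1⟩).mul_const (1 - t)

end Iterate

lemma tendsto_apply_zero_of_mem_closure {ι 𝕜 E F : Type*} [NontriviallyNormedField 𝕜]
    [NormedAddCommGroup E] [NormedSpace 𝕜 E] [NormedAddCommGroup F] [NormedSpace 𝕜 F]
    {l : Filter ι} {T : ι → E →L[𝕜] F} {C : ℝ} (hT : ∀ i, ‖T i‖ ≤ C) {s : Set E}
    (hs : ∀ z ∈ s, Tendsto (T · z) l (𝓝 0)) {x : E} (hx : x ∈ closure s) :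
    Tendsto (T · x) l (𝓝 0) := by
  have hequi : Equicontinuous ((↑) ∘ T) :=
    ((NormedSpace.equicontinuous_TFAE T).out 1 5).mpr (⟨C, hT⟩ : ∃ C, ∀ i, ‖T i‖ ≤ C)
  exact closure_minimal hs (hequi.isClosed_setOfPred_tendsto continuous_const) hx

section Operator

variable {E : Type*} [NormedAddCommGroup E] [NormedSpace ℂ E]

lemma aeval_apply_of_apply_eq_smul {A : E →L[ℂ] E} {μ : ℝ} {k : E} (hk : A k = μ • k)
    (p : Polynomial ℝ) : Polynomial.aeval A p k = p.eval μ • k := by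
  induction p using Polynomial.induction_on' with
  | add p q hp hq => simp [hp, hq, add_smul]
  | monomial n r =>
    have hpow : (A ^ n) k = μ ^ n • k := by
      induction n with
      | zero => simp
      | succ n ih =>
        rw [pow_succ', mul_apply_eq_comp, ih, ContinuousLinearMap.map_smul_of_tower, hk, smul_smul,
          pow_succ]
    simp [Polynomial.aeval_monomial, hpow, smul_smul, mul_comm]

lemma abs_le_opNorm_of_apply_eq_smul {A : E →L[ℂ] E} {μ : ℝ} {k : E} (hk : A k = μ • k)
    (hk0 : k ≠ 0) : |μ| ≤ ‖A‖ := by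
  have : |μ| * ‖k‖ ≤ ‖A‖ * ‖k‖ := by
    simpa [hk, norm_smul] using A.le_opNorm k
  exact le_of_mul_le_mul_right this (norm_pos_iff.mpr hk0)

end Operator

section Hilbert

variable {H : Type*} [NormedAddCommGroup H] [InnerProductSpace ℂ H] [CompleteSpace H]

theorem cfc_apply_of_apply_eq_smul {A : H →L[ℂ] H} (hA : IsSelfAdjoint A) {q : ℝ → ℝ}
    (hq : Continuous q) {μ : ℝ} {k : H} (hk : A k = μ • k) : cfc q A k = q μ • k := by
  rcases eq_or_ne k 0 with rfl | hk0
  · simp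
  have : Nontrivial H := ⟨k, 0, hk0⟩
  set I := Icc (-‖A‖) ‖A‖
  have hμ : μ ∈ I := abs_le.mp (abs_le_opNorm_of_apply_eq_smul hk hk0)
  have hspec : spectrum ℝ A ⊆ I := by
    simpa [Real.closedBall_eq_Icc] using spectrum.subset_closedBall_norm (𝕜 := ℝ) A
  choose p hp using fun n : ℕ => exists_polynomial_near_of_continuousOn (-‖A‖) ‖A‖ q
    hq.continuousOn (1 / (n + 1)) Nat.one_div_pos_of_nat
  have hunif : TendstoUniformlyOn (fun n => (p n).eval) q atTop I := by
    rw [Metric.tendstoUniformlyOn_iff]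
    intro ε hε
    obtain ⟨N, hN⟩ := exists_nat_one_div_lt hε
    filter_upwards [eventually_ge_atTop N] with n hn t ht
    rw [Real.dist_eq, abs_sub_comm]
    exact (hp n t ht).trans (lt_of_le_of_lt (Nat.one_div_le_one_div hn) hN)
  have hcfc : Tendsto (fun n => cfc (p n).eval A k) atTop (𝓝 (cfc q A k)) :=
    ((ContinuousLinearMap.apply ℂ H k).continuous.tendsto _).comp <|
      tendsto_cfc_fun (hunif.mono hspec) (.of_forall fun n => (p n).continuousOn)
  have hpoly (n : ℕ) : cfc (p n).eval A k = (p n).eval μ • k := by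
    rw [cfc_polynomial (p n) A, aeval_apply_of_apply_eq_smul hk]
  simp only [hpoly] at hcfc
  exact tendsto_nhds_unique hcfc ((hunif.tendsto_at hμ).smul_const k)

lemma orthogonal_ker_one_sub {A : H →L[ℂ] H} (hA : IsSelfAdjoint A) :
    ((LinearMap.ker ((1 - A : H →L[ℂ] H) : H →ₗ[ℂ] H))ᗮ : Set H) =
      closure (range (1 - A : H →L[ℂ] H)) := by
  rw [ContinuousLinearMap.orthogonal_ker, ((IsSelfAdjoint.one _).sub hA).adjoint_eq,
    Submodule.topologicalClosure_coe]
  rfl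

lemma tendsto_cfc_apply_one_sub {A : H →L[ℂ] H} (hA : IsSelfAdjoint A) {g : ℕ → ℝ → ℝ}
    (hg : ∀ n, Continuous (g n))
    (hunif : TendstoUniformlyOn (fun n t => g n t * (1 - t)) 0 atTop (spectrum ℝ A)) (w : H) :
    Tendsto (fun n => cfc (g n) A ((1 - A) w)) atTop (𝓝 0) := by
  have hfactor (n : ℕ) : cfc (g n) A ((1 - A) w) = cfc (fun t => g n t * (1 - t)) A w := by
    rw [cfc_mul (g n) (1 - ·) A, cfc_sub .., cfc_const_one ℝ A, cfc_id' ℝ A]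
    rfl
  have hlim := ((ContinuousLinearMap.apply ℂ H w).continuous.tendsto _).comp <|
    tendsto_cfc_fun hunif (.of_forall fun n => by fun_prop)
  rw [cfc_zero] at hlim
  exact hlim.congr fun n => (hfactor n).symm

lemma tendsto_projOnto_of_tendsto_orthogonal {ι : Type*} {l : Filter ι} {T : ι → H →L[ℂ] H}
    (K : Submodule ℂ H) [CompleteSpace K] (hK : ∀ i, ∀ k ∈ K, T i k = k)
    (hKperp : ∀ z ∈ Kᗮ, Tendsto (T · z) l (𝓝 0)) (x : H) :
    Tendsto (T · x) l (𝓝 (projOnto K x)) := by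
  have hperp := (hKperp _ (K.sub_starProjection_mem_orthogonal x)).const_add (K.starProjection x)
  rw [add_zero] at hperp
  refine hperp.congr fun i => ?_
  rw [map_sub, hK i _ (K.starProjection_apply_mem x), add_sub_cancel]

end Hilbert

/-- For self-adjoint `A` with `σ(A) ⊆ [0,1]` and continuous `f` mapping `[0,1]` to
itself with `f x < x` on `(0,1)`, `f 0 = 0`, `f 1 = 1`, the operators `f^[n](A)`
converge strongly to the orthogonal projection onto `ker (I - A)`. -/
theorem stmt19 {H : Type*} [NormedAddCommGroup H] [InnerProductSpace ℂ H] [CompleteSpace H]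
    (A : H →L[ℂ] H) (hA : IsSelfAdjoint A)
    (hspec : spectrum ℝ A ⊆ Set.Icc 0 1)
    (f : ℝ → ℝ) (hf : Continuous f)
    (hmaps : Set.MapsTo f (Set.Icc 0 1) (Set.Icc 0 1))
    (hlt : ∀ x ∈ Set.Ioo (0 : ℝ) 1, f x < x)
    (hf0 : f 0 = 0) (hf1 : f 1 = 1) :
    ∀ x : H,
      Tendsto (fun n : ℕ => cfc (f^[n]) A x) atTop
        (𝓝 (projOnto (LinearMap.ker ((1 - A : H →L[ℂ] H) : H →ₗ[ℂ] H)) x)) := by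
  have hle : ∀ t ∈ Icc (0 : ℝ) 1, f t ≤ t := fun _ => apply_le_self_of_mem_Icc hf0.le hf1.le hlt
  refine tendsto_projOnto_of_tendsto_orthogonal _ (fun n k hk => ?_) (fun z hz => ?_)
  · have hAk : A k = (1 : ℝ) • k := by
      rw [one_smul, eq_comm, ← sub_eq_zero]
      exact LinearMap.mem_ker.mp hk
    rw [cfc_apply_of_apply_eq_smul hA (hf.iterate n) hAk, Function.iterate_fixed hf1, one_smul]
  have hnorm (n : ℕ) : ‖cfc (f^[n]) A‖ ≤ 1 := norm_cfc_le zero_le_one fun t ht => by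
    rw [Real.norm_eq_abs, abs_le]
    exact ⟨by linarith [(hmaps.iterate n (hspec ht)).1], (hmaps.iterate n (hspec ht)).2⟩
  rw [← SetLike.mem_coe, orthogonal_ker_one_sub hA] at hz
  refine tendsto_apply_zero_of_mem_closure hnorm ?_ hz
  rintro _ ⟨w, rfl⟩
  exact tendsto_cfc_apply_one_sub hA (fun n => hf.iterate n)
    ((tendstoUniformlyOn_iterate_mul_one_sub hf hmaps hle hlt).mono hspec) w
end
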